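/- For a q-bit layered erasure channel with state N independent of (V, X^q), the mutual information decomposes as I(V; X^N) = Σ_{n=1}^{q} P(N ≥ n) · I(V; X_n | X^{n-1}). -/
import Mathlib


open Finset

attribute [local instance] Classical.propDecidable

/-- Probability of an event under a pmf `p` on a finite sample space. -/
noncomputable def pA {Ω : Type*} [Fintype Ω] (p : Ω → ℝ) (A : Ω → Prop) : ℝ :=
  ∑ ω : Ω, if A ω then p ω else 0

/-- `p` is a probability mass function. -/
def IsPMF {Ω : Type*} [Fintype Ω] (p : Ω → ℝ) : Prop :=
  (∀ ω, 0 ≤ p ω) ∧ ∑ ω : Ω, p ω = 1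

/-- Shannon entropy (base 2) of a random variable `X` under pmf `p`. -/
noncomputable def ent {Ω α : Type*} [Fintype Ω] [Fintype α] (p : Ω → ℝ) (X : Ω → α) : ℝ :=
  -∑ a : α, pA p (fun ω => X ω = a) * Real.logb 2 (pA p (fun ω => X ω = a))

/-- Conditional entropy `H(X|Y)`. -/
noncomputable def condEnt {Ω α β : Type*} [Fintype Ω] [Fintype α] [Fintype β]
    (p : Ω → ℝ) (X : Ω → α) (Y : Ω → β) : ℝ :=
  ent p (fun ω => (X ω, Y ω)) - ent p Y

/-- Mutual information `I(X;Y)`. -/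
noncomputable def mutInfo {Ω α β : Type*} [Fintype Ω] [Fintype α] [Fintype β]
    (p : Ω → ℝ) (X : Ω → α) (Y : Ω → β) : ℝ :=
  ent p X - condEnt p X Y

/-- Conditional mutual information `I(X;Y|V)`. -/
noncomputable def condMutInfo {Ω α β γ : Type*} [Fintype Ω] [Fintype α] [Fintype β] [Fintype γ]
    (p : Ω → ℝ) (X : Ω → α) (Y : Ω → β) (V : Ω → γ) : ℝ :=
  condEnt p X V - condEnt p X (fun ω => (Y ω, V ω))

/-- Independence of two random variables under pmf `p`. -/
def Indep {Ω α β : Type*} [Fintype Ω] (p : Ω → ℝ) (X : Ω → α) (Y : Ω → β) : Prop :=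
  ∀ a b, pA p (fun ω => X ω = a ∧ Y ω = b)
    = pA p (fun ω => X ω = a) * pA p (fun ω => Y ω = b)

section helpers
variable {Ω : Type*} [Fintype Ω]

lemma pA_congr (p : Ω → ℝ) {A B : Ω → Prop} (h : ∀ ω, A ω ↔ B ω) : pA p A = pA p B :=
  Finset.sum_congr rfl (fun ω _ => by simp [h ω])

lemma pA_false (p : Ω → ℝ) : pA p (fun _ => False) = 0 := by simp [pA]

lemma pA_true (p : Ω → ℝ) (hp : IsPMF p) : pA p (fun _ => True) = 1 := by simp [pA, hp.2]

lemma pA_partition {γ : Type*} [Fintype γ] (p : Ω → ℝ) (A : Ω → Prop) (Z : Ω → γ) :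
    pA p A = ∑ c : γ, pA p (fun ω => A ω ∧ Z ω = c) := by
  unfold pA
  rw [Finset.sum_comm]
  refine Finset.sum_congr rfl fun ω _ => ?_
  by_cases h : A ω <;> simp [h]

lemma pA_comp {γ : Type*} [Fintype γ] (p : Ω → ℝ) (Q : γ → Prop) (Z : Ω → γ) :
    pA p (fun ω => Q (Z ω)) = ∑ c : γ, if Q c then pA p (fun ω => Z ω = c) else 0 := by
  rw [pA_partition p _ Z]
  refine Finset.sum_congr rfl fun c _ => ?_
  by_cases h : Q c
  · rw [if_pos h]
    exact pA_congr p fun ω => ⟨fun h2 => h2.2, fun h2 => ⟨h2 ▸ h, h2⟩⟩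
  · rw [if_neg h, ← pA_false p]
    exact pA_congr p fun ω => ⟨fun h2 => h (h2.2 ▸ h2.1), False.elim⟩

lemma sum_pA_eq_one {γ : Type*} [Fintype γ] (p : Ω → ℝ) (hp : IsPMF p) (Z : Ω → γ) :
    ∑ c : γ, pA p (fun ω => Z ω = c) = 1 := by
  have h := pA_partition p (fun _ => True) Z
  rw [pA_true p hp] at h
  rw [h]
  exact Finset.sum_congr rfl fun c _ => pA_congr p fun ω => by simp

lemma phi_mul (r s : ℝ) :
    (r * s) * Real.logb 2 (r * s) = s * (r * Real.logb 2 r) + r * (s * Real.logb 2 s) := by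
  rcases eq_or_ne r 0 with h | h
  · simp [h]
  rcases eq_or_ne s 0 with h2 | h2
  · simp [h2]
  rw [Real.logb_mul h h2]; ring

end helpers

section helpers2
variable {Ω : Type*} [Fintype Ω]

lemma ent_comp {α β : Type*} [Fintype α] [Fintype β] (p : Ω → ℝ) (X : Ω → α)
    (f : α → β) (g : β → α) (hg : ∀ ω, g (f (X ω)) = X ω) :
    ent p (fun ω => f (X ω)) = ent p X := by
  have h1 : ∀ b, pA p (fun ω => f (X ω) = b)
      = if f (g b) = b then pA p (fun ω => X ω = g b) else 0 := by
    intro b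
    by_cases hb : f (g b) = b
    · rw [if_pos hb]
      refine pA_congr p fun ω => ⟨fun h => by rw [← hg ω, h], fun h => by rw [h, hb]⟩
    · rw [if_neg hb, ← pA_false p]
      refine pA_congr p fun ω => ⟨fun h => hb ?_, False.elim⟩
      rw [← h, hg ω]
  have h2 : ∀ a, pA p (fun ω => X ω = a) ≠ 0 → g (f a) = a := by
    intro a ha
    by_contra hga
    apply ha
    rw [← pA_false p]
    refine pA_congr p fun ω => ⟨fun h => hga ?_, False.elim⟩
    rw [← h, hg ω]
  unfold ent
  rw [neg_inj]
  have L : (∑ b : β, pA p (fun ω => f (X ω) = b) * Real.logb 2 (pA p (fun ω => f (X ω) = b)))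
      = ∑ b ∈ univ.filter (fun b => f (g b) = b),
          pA p (fun ω => X ω = g b) * Real.logb 2 (pA p (fun ω => X ω = g b)) := by
    rw [Finset.sum_filter]
    refine Finset.sum_congr rfl fun b _ => ?_
    rw [h1 b]
    split <;> simp
  have R : (∑ a : α, pA p (fun ω => X ω = a) * Real.logb 2 (pA p (fun ω => X ω = a)))
      = ∑ a ∈ univ.filter (fun a => g (f a) = a),
          pA p (fun ω => X ω = a) * Real.logb 2 (pA p (fun ω => X ω = a)) := by
    rw [Finset.sum_filter]
    refine Finset.sum_congr rfl fun a _ => ?_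
    split
    · rfl
    · rename_i h
      have : pA p (fun ω => X ω = a) = 0 := by
        by_contra hc; exact h (h2 a hc)
      simp [this]
  rw [L, R]
  refine Finset.sum_nbij' g f ?_ ?_ ?_ ?_ ?_
  · intro b hb
    simp only [Finset.mem_filter, Finset.mem_univ, true_and] at hb ⊢
    rw [hb]
  · intro a ha
    simp only [Finset.mem_filter, Finset.mem_univ, true_and] at ha ⊢
    rw [ha]
  · intro b hb
    simp only [Finset.mem_filter, Finset.mem_univ, true_and] at hb
    exact hb
  · intro a ha
    simp only [Finset.mem_filter, Finset.mem_univ, true_and] at ha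
    exact ha
  · intro b _
    rfl

lemma ent_const {α : Type*} [Fintype α] (p : Ω → ℝ) (hp : IsPMF p) (c : α) :
    ent p (fun _ => c) = 0 := by
  unfold ent
  have h : ∀ a : α, pA p (fun _ : Ω => c = a) = if c = a then 1 else 0 := by
    intro a
    by_cases hc : c = a
    · rw [if_pos hc, ← pA_true p hp]
      exact pA_congr p fun ω => by simp [hc]
    · rw [if_neg hc, ← pA_false p]
      exact pA_congr p fun ω => by simp [hc]
  simp only [h]
  rw [Finset.sum_eq_single c] <;> simp +contextual [eq_comm]

end helpers2

section helpers3
variable {Ω : Type*} [Fintype Ω]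

lemma indep_event {κ : Type*} [Fintype κ] {q : ℕ} (p : Ω → ℝ)
    (N : Ω → Fin (q+1)) (U : Ω → κ)
    (hind : ∀ a b, pA p (fun ω => N ω = a ∧ U ω = b)
      = pA p (fun ω => N ω = a) * pA p (fun ω => U ω = b))
    (k : Fin (q+1)) (S : κ → Prop) :
    pA p (fun ω => N ω = k ∧ S (U ω))
      = pA p (fun ω => N ω = k) * pA p (fun ω => S (U ω)) := by
  rw [pA_partition p _ U, pA_comp p S U, Finset.mul_sum]
  refine Finset.sum_congr rfl fun u _ => ?_
  by_cases h : S u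
  · rw [if_pos h, ← hind k u]
    exact pA_congr p fun ω => ⟨fun hh => ⟨hh.1.1, hh.2⟩, fun hh => ⟨⟨hh.1, hh.2 ▸ h⟩, hh.2⟩⟩
  · rw [if_neg h, mul_zero, ← pA_false p]
    exact pA_congr p fun ω => ⟨fun hh => h (hh.2 ▸ hh.1.2), False.elim⟩

lemma ent_pair_decomp {κ β : Type*} [Fintype κ] [Fintype β] {q : ℕ}
    (p : Ω → ℝ) (hp : IsPMF p) (N : Ω → Fin (q+1)) (U : Ω → κ)
    (hind : ∀ a b, pA p (fun ω => N ω = a ∧ U ω = b)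
      = pA p (fun ω => N ω = a) * pA p (fun ω => U ω = b))
    (G : Fin (q+1) → κ → β) (T : Ω → β)
    (hT : ∀ ω, T ω = G (N ω) (U ω)) :
    ent p (fun ω => (N ω, T ω))
      = ent p N + ∑ k : Fin (q+1),
          pA p (fun ω => N ω = k) * ent p (fun ω => G k (U ω)) := by
  have hjoint : ∀ (k : Fin (q+1)) (b : β),
      pA p (fun ω => (N ω, T ω) = (k, b))
        = pA p (fun ω => N ω = k) * pA p (fun ω => G k (U ω) = b) := by
    intro k b
    rw [← indep_event p N U hind k (fun u => G k u = b)]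
    refine pA_congr p fun ω => ?_
    rw [Prod.mk.injEq]
    constructor
    · rintro ⟨h1, h2⟩; exact ⟨h1, by rw [← h1]; rw [← hT ω]; exact h2⟩
    · rintro ⟨h1, h2⟩; exact ⟨h1, by rw [hT ω, h1]; exact h2⟩
  unfold ent
  rw [Fintype.sum_prod_type]
  have step : ∀ k : Fin (q+1),
      (∑ b : β, pA p (fun ω => (N ω, T ω) = (k, b))
          * Real.logb 2 (pA p (fun ω => (N ω, T ω) = (k, b))))
        = pA p (fun ω => N ω = k) * Real.logb 2 (pA p (fun ω => N ω = k))
          + pA p (fun ω => N ω = k) * ∑ b : β, pA p (fun ω => G k (U ω) = b)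
              * Real.logb 2 (pA p (fun ω => G k (U ω) = b)) := by
    intro k
    have : ∀ b : β, pA p (fun ω => (N ω, T ω) = (k, b))
        * Real.logb 2 (pA p (fun ω => (N ω, T ω) = (k, b)))
        = pA p (fun ω => G k (U ω) = b)
            * (pA p (fun ω => N ω = k) * Real.logb 2 (pA p (fun ω => N ω = k)))
          + pA p (fun ω => N ω = k) * (pA p (fun ω => G k (U ω) = b)
            * Real.logb 2 (pA p (fun ω => G k (U ω) = b))) := by
      intro b; rw [hjoint k b]; exact phi_mul _ _
    rw [Finset.sum_congr rfl fun b _ => this b, Finset.sum_add_distrib,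
      ← Finset.sum_mul, ← Finset.mul_sum, sum_pA_eq_one p hp (fun ω => G k (U ω)), one_mul]
  rw [Finset.sum_congr rfl fun k _ => step k, Finset.sum_add_distrib, neg_add]
  congr 1
  rw [← Finset.sum_neg_distrib]
  exact Finset.sum_congr rfl fun k _ => by rw [← mul_neg]

end helpers3

lemma card_filter_lt (q n : ℕ) (h : n ≤ q) :
    ((Finset.univ : Finset (Fin q)).filter (fun (i : Fin q) => (i : ℕ) < n)).card = n := by
  have hlt : ∀ m ∈ Finset.range n, m < q := fun m hm => lt_of_lt_of_le (Finset.mem_range.mp hm) h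
  have : (Finset.univ : Finset (Fin q)).filter (fun (i : Fin q) => (i : ℕ) < n)
      = (Finset.range n).attachFin hlt := by
    ext i
    simp only [Finset.mem_filter, Finset.mem_univ, true_and, Finset.mem_attachFin,
      Finset.mem_range]
  rw [this, Finset.card_attachFin, Finset.card_range]

/-- The truncation family: first `m` bits of `X`, rest erased. -/
noncomputable def Wfam {Ω : Type*} {q : ℕ} (X : Ω → Fin q → Bool) (m : ℕ) :
    Ω → Fin q → Option Bool :=
  fun ω i => if (i : ℕ) < m then some (X ω i) else none

section main
variable {Ω 𝒱 : Type*} [Fintype Ω] [Fintype 𝒱] {q : ℕ}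

/-- Recoding `(X_n, W_n)` into `W_{n+1}`. -/
lemma ent_pair_W (p : Ω → ℝ) (X : Ω → Fin q → Bool) (n : Fin q) :
    ent p (fun ω => (X ω n, Wfam X (n : ℕ) ω)) = ent p (Wfam X ((n : ℕ) + 1)) := by
  have h := ent_comp p (fun ω => (X ω n, Wfam X (n : ℕ) ω))
    (fun bw => fun i : Fin q => if (i : ℕ) = (n : ℕ) then some bw.1 else bw.2 i)
    (fun w => ((w n).getD false, fun i : Fin q => if (i : ℕ) < (n : ℕ) then w i else none))
    (by
      intro ω
      refine Prod.ext ?_ ?_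
      · show (if ((n : Fin q) : ℕ) = (n : ℕ) then some (X ω n)
          else Wfam X (n : ℕ) ω n).getD false = X ω n
        rw [if_pos rfl]
        rfl
      · show (fun i : Fin q => if (i : ℕ) < (n : ℕ) then
            (if (i : ℕ) = (n : ℕ) then some (X ω n) else Wfam X (n : ℕ) ω i) else none)
          = Wfam X (n : ℕ) ω
        funext i
        by_cases hi : (i : ℕ) < (n : ℕ)
        · rw [if_pos hi, if_neg (by omega)]
        · rw [if_neg hi]
          show _ = if (i : ℕ) < (n : ℕ) then some (X ω i) else none
          rw [if_neg hi])
  rw [← h]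
  congr 1
  funext ω
  funext i
  show (if (i : ℕ) = (n : ℕ) then some (X ω n)
      else if (i : ℕ) < (n : ℕ) then some (X ω i) else none)
    = if (i : ℕ) < (n : ℕ) + 1 then some (X ω i) else none
  by_cases hi : (i : ℕ) = (n : ℕ)
  · have : i = n := Fin.ext hi
    subst this
    rw [if_pos rfl, if_pos (by omega)]
  · rw [if_neg hi]
    by_cases hi2 : (i : ℕ) < (n : ℕ)
    · rw [if_pos hi2, if_pos (by omega)]
    · rw [if_neg hi2, if_neg (by omega)]

/-- Recoding `(V, (X_n, W_n))` into `(V, W_{n+1})`. -/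
lemma ent_triple_W (p : Ω → ℝ) (V : Ω → 𝒱) (X : Ω → Fin q → Bool) (n : Fin q) :
    ent p (fun ω => (V ω, (X ω n, Wfam X (n : ℕ) ω)))
      = ent p (fun ω => (V ω, Wfam X ((n : ℕ) + 1) ω)) := by
  have h := ent_comp p (fun ω => (V ω, (X ω n, Wfam X (n : ℕ) ω)))
    (fun vbw => (vbw.1, fun i : Fin q =>
        if (i : ℕ) = (n : ℕ) then some vbw.2.1 else vbw.2.2 i))
    (fun vw => (vw.1, ((vw.2 n).getD false,
        fun i : Fin q => if (i : ℕ) < (n : ℕ) then vw.2 i else none)))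
    (by
      intro ω
      refine Prod.ext rfl (Prod.ext ?_ ?_)
      · show (if ((n : Fin q) : ℕ) = (n : ℕ) then some (X ω n)
          else Wfam X (n : ℕ) ω n).getD false = X ω n
        rw [if_pos rfl]
        rfl
      · show (fun i : Fin q => if (i : ℕ) < (n : ℕ) then
            (if (i : ℕ) = (n : ℕ) then some (X ω n) else Wfam X (n : ℕ) ω i) else none)
          = Wfam X (n : ℕ) ω
        funext i
        by_cases hi : (i : ℕ) < (n : ℕ)
        · rw [if_pos hi, if_neg (by omega)]
        · rw [if_neg hi]
          show _ = if (i : ℕ) < (n : ℕ) then some (X ω i) else none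
          rw [if_neg hi])
  rw [← h]
  congr 1
  funext ω
  refine Prod.ext rfl ?_
  funext i
  show (if (i : ℕ) = (n : ℕ) then some (X ω n)
      else if (i : ℕ) < (n : ℕ) then some (X ω i) else none)
    = if (i : ℕ) < (n : ℕ) + 1 then some (X ω i) else none
  by_cases hi : (i : ℕ) = (n : ℕ)
  · have : i = n := Fin.ext hi
    subst this
    rw [if_pos rfl, if_pos (by omega)]
  · rw [if_neg hi]
    by_cases hi2 : (i : ℕ) < (n : ℕ)
    · rw [if_pos hi2, if_pos (by omega)]
    · rw [if_neg hi2, if_neg (by omega)]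

end main

/-- For a `q`-bit layered erasure channel with state `N` independent of
`(V, X)`, the mutual information decomposes as
`I(V; X^N) = ∑_{n=1}^q P(N ≥ n) I(V; X_n | X^{n-1})`. -/
theorem mutInfo_layered_erasure_level_decomposition
    {Ω 𝒱 : Type*} [Fintype Ω] [Fintype 𝒱] {q : ℕ}
    (p : Ω → ℝ) (hp : IsPMF p)
    (X : Ω → Fin q → Bool) (N : Ω → Fin (q+1)) (V : Ω → 𝒱)
    (hind : Indep p N (fun ω => (V ω, X ω)))
    (Y : Ω → Fin q → Option Bool)
    (hY : ∀ ω i, Y ω i = if (i : ℕ) < (N ω : ℕ) then some (X ω i) else none) :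
    mutInfo p V Y
      = ∑ n : Fin q, pA p (fun ω => (n : ℕ) < (N ω : ℕ))
          * condMutInfo p V (fun ω => X ω n)
              (fun ω => fun i : Fin q =>
                if (i : ℕ) < (n : ℕ) then some (X ω i) else none) := by
  show mutInfo p V Y
      = ∑ n : Fin q, pA p (fun ω => (n : ℕ) < (N ω : ℕ))
          * condMutInfo p V (fun ω => X ω n) (Wfam X (n : ℕ))
  -- recovering N from Y
  have hcard : ∀ y : Fin q → Option Bool,
      (Finset.univ.filter (fun i : Fin q => (y i).isSome = true)).card < q + 1 :=
    fun y => Nat.lt_succ_of_le (le_trans (Finset.card_filter_le _ _) (by simp))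
  set g0 : (Fin q → Option Bool) → Fin (q+1) :=
    fun y => ⟨(Finset.univ.filter (fun i : Fin q => (y i).isSome = true)).card, hcard y⟩
    with hg0def
  have hg0 : ∀ ω, g0 (Y ω) = N ω := by
    intro ω
    apply Fin.ext
    show (Finset.univ.filter (fun i : Fin q => (Y ω i).isSome = true)).card = (N ω : ℕ)
    have hfe : (Finset.univ.filter (fun i : Fin q => (Y ω i).isSome = true))
        = Finset.univ.filter (fun i : Fin q => (i : ℕ) < (N ω : ℕ)) := by
      refine Finset.filter_congr fun i _ => ?_
      rw [hY ω i]
      by_cases h : (i : ℕ) < (N ω : ℕ) <;> simp [h]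
    rw [hfe, card_filter_lt q _ (Nat.lt_succ_iff.mp (N ω).isLt)]
  -- entropy identities
  have e1 : ent p Y = ent p (fun ω => (N ω, Y ω)) := by
    have h := ent_comp p Y (fun y => (g0 y, y)) (fun z => z.2) (fun ω => rfl)
    have h2 : ent p (fun ω => (g0 (Y ω), Y ω)) = ent p (fun ω => (N ω, Y ω)) := by
      congr 1
      funext ω
      rw [hg0 ω]
    rw [← h2, h]
  have e2 : ent p (fun ω => (V ω, Y ω)) = ent p (fun ω => (N ω, (V ω, Y ω))) := by
    have h := ent_comp p (fun ω => (V ω, Y ω)) (fun vy => (g0 vy.2, vy)) (fun z => z.2)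
      (fun ω => rfl)
    have h2 : ent p (fun ω => (g0 (Y ω), (V ω, Y ω)))
        = ent p (fun ω => (N ω, (V ω, Y ω))) := by
      congr 1
      funext ω
      rw [hg0 ω]
    rw [← h2]
    exact h.symm
  -- decompositions via independence
  have d1 : ent p (fun ω => (N ω, Y ω))
      = ent p N + ∑ k : Fin (q+1),
          pA p (fun ω => N ω = k) * ent p (Wfam X (k : ℕ)) :=
    ent_pair_decomp p hp N (fun ω => (V ω, X ω)) hind
      (fun k u => fun i : Fin q => if (i : ℕ) < (k : ℕ) then some (u.2 i) else none)
      Y (fun ω => funext fun i => hY ω i)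
  have d2 : ent p (fun ω => (N ω, (V ω, Y ω)))
      = ent p N + ∑ k : Fin (q+1),
          pA p (fun ω => N ω = k) * ent p (fun ω => (V ω, Wfam X (k : ℕ) ω)) :=
    ent_pair_decomp p hp N (fun ω => (V ω, X ω)) hind
      (fun k u => (u.1, fun i : Fin q => if (i : ℕ) < (k : ℕ) then some (u.2 i) else none))
      (fun ω => (V ω, Y ω))
      (fun ω => Prod.ext rfl (funext fun i => hY ω i))
  -- base cases
  have b1 : ent p (Wfam X 0) = 0 := by
    have h : Wfam X 0 = fun _ : Ω => (fun _ : Fin q => (none : Option Bool)) := by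
      funext ω i
      show (if (i : ℕ) < 0 then some (X ω i) else none) = none
      rw [if_neg (by omega)]
    rw [h]
    exact ent_const p hp _
  have b2 : ent p (fun ω => (V ω, Wfam X 0 ω)) = ent p V := by
    have h := ent_comp p V (fun v => (v, fun _ : Fin q => (none : Option Bool))) Prod.fst
      (fun ω => rfl)
    rw [← h]
    congr 1
  -- telescoping
  set E : ℕ → ℝ :=
    fun m => ent p (fun ω => (V ω, Wfam X m ω)) - ent p (Wfam X m) with hEdef
  have hE0 : E 0 = ent p V := by
    rw [hEdef]
    show ent p (fun ω => (V ω, Wfam X 0 ω)) - ent p (Wfam X 0) = ent p V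
    rw [b1, b2, sub_zero]
  have hc : ∀ n : Fin q, condMutInfo p V (fun ω => X ω n) (Wfam X (n : ℕ))
      = E (n : ℕ) - E ((n : ℕ) + 1) := by
    intro n
    simp only [condMutInfo, condEnt, hEdef]
    rw [ent_pair_W p X n, ent_triple_W p V X n]
  have key : ∀ k : Fin (q+1), ent p V - E (k : ℕ)
      = ∑ n : Fin q, (if (n : ℕ) < (k : ℕ) then
          condMutInfo p V (fun ω => X ω n) (Wfam X (n : ℕ)) else 0) := by
    intro k
    have h1 : (∑ n : Fin q, (if (n : ℕ) < (k : ℕ) then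
          condMutInfo p V (fun ω => X ω n) (Wfam X (n : ℕ)) else 0))
        = ∑ m ∈ Finset.range q, (if m < (k : ℕ) then E m - E (m + 1) else 0) := by
      rw [← Fin.sum_univ_eq_sum_range (fun m => if m < (k : ℕ) then E m - E (m + 1) else 0) q]
      refine Finset.sum_congr rfl fun n _ => ?_
      rw [hc n]
    have h2 : (∑ m ∈ Finset.range q, (if m < (k : ℕ) then E m - E (m + 1) else 0))
        = ∑ m ∈ Finset.range (k : ℕ), (E m - E (m + 1)) := by
      rw [← Finset.sum_filter]
      congr 1
      ext m
      simp only [Finset.mem_filter, Finset.mem_range]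
      have := Nat.lt_succ_iff.mp k.isLt
      omega
    rw [h1, h2, Finset.sum_range_sub' E (k : ℕ), hE0]
  -- main computation
  have hsum1 : ∑ k : Fin (q+1), pA p (fun ω => N ω = k) = 1 := sum_pA_eq_one p hp N
  calc mutInfo p V Y
      = ent p V + ent p Y - ent p (fun ω => (V ω, Y ω)) := by
        simp only [mutInfo, condEnt]; ring
    _ = ent p V
        + (ent p N + ∑ k : Fin (q+1), pA p (fun ω => N ω = k) * ent p (Wfam X (k : ℕ)))
        - (ent p N + ∑ k : Fin (q+1),
            pA p (fun ω => N ω = k) * ent p (fun ω => (V ω, Wfam X (k : ℕ) ω))) := by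
        rw [e1, d1, e2, d2]
    _ = ∑ k : Fin (q+1), pA p (fun ω => N ω = k) * (ent p V - E (k : ℕ)) := by
        simp only [hEdef, mul_sub]
        rw [Finset.sum_sub_distrib, Finset.sum_sub_distrib, ← Finset.sum_mul, hsum1, one_mul]
        ring
    _ = ∑ k : Fin (q+1), pA p (fun ω => N ω = k)
          * ∑ n : Fin q, (if (n : ℕ) < (k : ℕ) then
              condMutInfo p V (fun ω => X ω n) (Wfam X (n : ℕ)) else 0) := by
        exact Finset.sum_congr rfl fun k _ => by rw [key k]
    _ = ∑ n : Fin q, pA p (fun ω => (n : ℕ) < (N ω : ℕ))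
          * condMutInfo p V (fun ω => X ω n) (Wfam X (n : ℕ)) := by
        simp only [Finset.mul_sum]
        rw [Finset.sum_comm]
        refine Finset.sum_congr rfl fun n _ => ?_
        rw [pA_comp p (fun k : Fin (q+1) => (n : ℕ) < (k : ℕ)) N, Finset.sum_mul]
        refine Finset.sum_congr rfl fun k _ => ?_
        by_cases h : (n : ℕ) < (k : ℕ)
        · rw [if_pos h, if_pos h]
        · rw [if_neg h, if_neg h, mul_zero, zero_mul]
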